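/- arXiv:math/0702677 — 2 statements merged into one kernel-verified Lean document; each statement's English description precedes it below -/
import Mathlib

section
/- For every n ≥ 1, every x = (x₁,…,xₙ) ∈ Iⁿ and every i ∈ {1,…,n}: if |xᵢ| = 1 then the j-th coordinate of φₙ(x) is 0 for every j < i. -/
/-- The comparison map φₙ : Iⁿ → Gⁿ, defined recursively by φ₁(x₁) = x₁ and
    φₙ(t, y) = (t·√(1 − ‖φₙ₋₁(y)‖²), φₙ₋₁(y)). -/
noncomputable def phi : (n : ℕ) → EuclideanSpace ℝ (Fin n) → EuclideanSpace ℝ (Fin n)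
  | 0, x => x
  | n + 1, x =>
    WithLp.toLp 2 (Fin.cons (x 0 * Real.sqrt (1 - ‖phi n (WithLp.toLp 2 (fun i => x i.succ))‖ ^ 2))
        (phi n (WithLp.toLp 2 (fun i => x i.succ))) : Fin (n + 1) → ℝ)

/-- The n-cube Iⁿ = [−1,1]ⁿ, inside Euclidean n-space. -/
def cube (n : ℕ) : Set (EuclideanSpace ℝ (Fin n)) := {x | ∀ i, |x i| ≤ 1}

/-- The n-disk Dⁿ = {x : ‖x‖ ≤ 1}, the underlying space of the n-globe Gⁿ. -/
def disk (n : ℕ) : Set (EuclideanSpace ℝ (Fin n)) := {x | ‖x‖ ≤ 1}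

/-! By induction on `n`, `|xᵢ| = 1` forces `‖φₙ(x)‖ ≥ 1`: for `i = 1` (so `t² = 1`) the two summands of
`‖φₙ(t, y)‖² = t²(1 − ‖φₙ₋₁(y)‖²) + ‖φₙ₋₁(y)‖²` add up to at least `1`, and otherwise
`‖φₙ(t, y)‖ ≥ ‖φₙ₋₁(y)‖`. Applied to the tail starting at coordinate `j < i`, this makes the
radicand `1 − ‖φ(…)‖²` defining the `j`-th coordinate nonpositive, so that coordinate is `0`. -/

/-- `y` in the paper's splitting `x = (t, y)`. -/
def EuclideanSpace.tail {n : ℕ} (x : EuclideanSpace ℝ (Fin (n + 1))) :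
    EuclideanSpace ℝ (Fin n) :=
  WithLp.toLp 2 fun i => x i.succ

open EuclideanSpace

lemma phi_succ_apply_zero (n : ℕ) (x : EuclideanSpace ℝ (Fin (n + 1))) :
    phi (n + 1) x 0 = x 0 * √(1 - ‖phi n (tail x)‖ ^ 2) :=
  rfl

lemma phi_succ_apply_succ (n : ℕ) (x : EuclideanSpace ℝ (Fin (n + 1))) (j : Fin n) :
    phi (n + 1) x j.succ = phi n (tail x) j :=
  rfl

lemma norm_sq_phi_succ (n : ℕ) (x : EuclideanSpace ℝ (Fin (n + 1))) :
    ‖phi (n + 1) x‖ ^ 2 = (x 0 * √(1 - ‖phi n (tail x)‖ ^ 2)) ^ 2 + ‖phi n (tail x)‖ ^ 2 := by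
  simp only [EuclideanSpace.norm_sq_eq, Fin.sum_univ_succ, phi_succ_apply_zero,
    phi_succ_apply_succ, Real.norm_eq_abs, sq_abs]

-- When `‖φₙ₋₁(y)‖ > 1` the radicand is negative and `Real.sqrt` returns `0`; the bound survives.
lemma one_le_norm_phi_of_abs_eq_one (n : ℕ) (x : EuclideanSpace ℝ (Fin n)) (i : Fin n)
    (hi : |x i| = 1) : 1 ≤ ‖phi n x‖ := by
  induction n with
  | zero => exact i.elim0
  | succ n ih =>
    set p := ‖phi n (tail x)‖
    have hsq := norm_sq_phi_succ n x
    suffices 1 ≤ ‖phi (n + 1) x‖ ^ 2 by nlinarith [norm_nonneg (phi (n + 1) x)]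
    rcases Fin.eq_zero_or_eq_succ i with rfl | ⟨i, rfl⟩
    · have hx0 : x 0 ^ 2 = 1 := by rw [← sq_abs, hi, one_pow]
      rw [hsq, mul_pow, hx0, one_mul, Real.sq_sqrt']
      rcases le_total (1 - p ^ 2) 0 with h | h
      · rw [max_eq_right h]; linarith
      · rw [max_eq_left h]; linarith
    · have hp : 1 ≤ p := ih (tail x) i hi
      nlinarith [sq_nonneg (x 0 * √(1 - p ^ 2))]

lemma phi_succ_apply_zero_eq_zero_of_abs_eq_one (n : ℕ) (x : EuclideanSpace ℝ (Fin (n + 1)))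
    (i : Fin n) (hi : |x i.succ| = 1) : phi (n + 1) x 0 = 0 := by
  have hp : 1 ≤ ‖phi n (tail x)‖ := one_le_norm_phi_of_abs_eq_one n (tail x) i hi
  rw [phi_succ_apply_zero, Real.sqrt_eq_zero'.mpr (by nlinarith), mul_zero]

theorem phi_coord_eq_zero_of_abs_coord_eq_one_general (n : ℕ)
    (x : EuclideanSpace ℝ (Fin n))
    (i : Fin n) (hi : |x i| = 1) :
    ∀ j : Fin n, j < i → phi n x j = 0 := by
  induction n with
  | zero => exact i.elim0
  | succ n ih =>
    intro j hj
    rcases Fin.eq_zero_or_eq_succ i with rfl | ⟨i, rfl⟩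
    · exact absurd hj (Fin.not_lt_zero j)
    rcases Fin.eq_zero_or_eq_succ j with rfl | ⟨j, rfl⟩
    · exact phi_succ_apply_zero_eq_zero_of_abs_eq_one n x i hi
    · exact ih (tail x) i hi j (Fin.succ_lt_succ_iff.mp hj)

/-- for `n ≥ 1`, `x ∈ Iⁿ` and an index `i` with `|xᵢ| = 1`, all coordinates
of `φₙ(x)` before the `i`-th vanish. (Indices are 0-based here, 1-based in the paper.) -/
theorem phi_coord_eq_zero_of_abs_coord_eq_one (n : ℕ) (hn : 1 ≤ n)
    (x : EuclideanSpace ℝ (Fin n)) (hx : x ∈ cube n)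
    (i : Fin n) (hi : |x i| = 1) :
    ∀ j : Fin n, j < i → phi n x j = 0 :=
  phi_coord_eq_zero_of_abs_coord_eq_one_general n x i hi
end

section
/- A singular cube factors through the globe exactly when it is globular: let X be a topological space, n ≥ 1, and a : Iⁿ → X a continuous map. Then there exists a continuous map g : Dⁿ → X with a = g ∘ φₙ if and only if for every i with 2 ≤ i ≤ n and all x, x' ∈ Iⁿ such that xᵢ = x'ᵢ ∈ {−1,1} and xⱼ = x'ⱼ for every j with i < j ≤ n, one has a(x) = a(x'). -/
/-! On the cube, `1 - ‖φₙ x‖² = ∏ᵢ (1 - xᵢ²)`. Hence `‖φₙ₋₁ y‖ = 1` exactly when some coordinate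
of `y` is `±1`, and then `φₙ (t, y) = (0, φₙ₋₁ y)` forgets `t`; otherwise `t` is recovered from
`φₙ (t, y)`. By induction, two points of the cube have the same image under `φₙ` iff they are
equal or agree from some coordinate `i ≥ 2` on, with `xᵢ = ±1` — which is precisely what the
globularity condition identifies. Since `φₙ` maps the compact cube continuously onto the
Hausdorff disk, it is a quotient map there, so a continuous `a` factors through it iff it is
constant on its fibres. -/

namespace EuclideanSpace

variable {n : ℕ}

def tail_s9 (x : EuclideanSpace ℝ (Fin (n + 1))) : EuclideanSpace ℝ (Fin n) :=
  WithLp.toLp 2 (fun i => x i.succ)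

def cons (c : ℝ) (v : EuclideanSpace ℝ (Fin n)) : EuclideanSpace ℝ (Fin (n + 1)) :=
  WithLp.toLp 2 (Fin.cons c v)

@[simp] lemma cons_zero (c : ℝ) (v : EuclideanSpace ℝ (Fin n)) : cons c v 0 = c := rfl

@[simp] lemma tail_cons (c : ℝ) (v : EuclideanSpace ℝ (Fin n)) : tail_s9 (cons c v) = v := rfl

lemma cons_head_tail (x : EuclideanSpace ℝ (Fin (n + 1))) : cons (x 0) (tail_s9 x) = x :=
  congrArg (WithLp.toLp 2) (Fin.cons_self_tail x.ofLp)

lemma norm_sq_cons (c : ℝ) (v : EuclideanSpace ℝ (Fin n)) :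
    ‖cons c v‖ ^ 2 = c ^ 2 + ‖v‖ ^ 2 := by
  simp [real_norm_sq_eq, Fin.sum_univ_succ, cons]

lemma norm_sq_eq_head_add_tail (x : EuclideanSpace ℝ (Fin (n + 1))) :
    ‖x‖ ^ 2 = x 0 ^ 2 + ‖tail_s9 x‖ ^ 2 := by
  rw [← norm_sq_cons, cons_head_tail]

@[fun_prop] lemma continuous_tail : Continuous (tail_s9 : EuclideanSpace ℝ (Fin (n + 1)) → _) :=
  (PiLp.continuous_toLp 2 _).comp (continuous_pi fun i => PiLp.continuous_apply 2 _ i.succ)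

@[fun_prop] lemma continuous_cons {α : Type*} [TopologicalSpace α] {f : α → ℝ}
    {g : α → EuclideanSpace ℝ (Fin n)} (hf : Continuous f) (hg : Continuous g) :
    Continuous fun a => cons (f a) (g a) :=
  (PiLp.continuous_toLp 2 _).comp
    (hf.finCons (A := fun _ => ℝ) ((PiLp.continuous_ofLp 2 _).comp hg))

end EuclideanSpace

open EuclideanSpace

lemma tail_mem_cube {n : ℕ} {x : EuclideanSpace ℝ (Fin (n + 1))} (hx : x ∈ cube (n + 1)) :
    tail_s9 x ∈ cube n := fun i => hx i.succ

lemma cons_mem_cube {n : ℕ} {t : ℝ} {y : EuclideanSpace ℝ (Fin n)} (ht : |t| ≤ 1)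
    (hy : y ∈ cube n) : cons t y ∈ cube (n + 1) :=
  Fin.cases ht hy

lemma isCompact_cube (n : ℕ) : IsCompact (cube n) := by
  have : cube n = PiLp.homeomorph 2 _ ⁻¹' Set.univ.pi fun _ => Set.Icc (-1) 1 := by
    ext x
    simp only [cube, Set.mem_ofPred_eq, Set.mem_preimage, Set.mem_univ_pi, Set.mem_Icc, abs_le]
    rfl
  rw [this, Homeomorph.isCompact_preimage]
  exact isCompact_univ_pi fun _ => isCompact_Icc

lemma phi_succ {n : ℕ} (x : EuclideanSpace ℝ (Fin (n + 1))) :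
    phi (n + 1) x = cons (x 0 * √(1 - ‖phi n (tail_s9 x)‖ ^ 2)) (phi n (tail_s9 x)) := rfl

lemma continuous_phi (n : ℕ) : Continuous (phi n) := by
  induction n with
  | zero => exact continuous_id
  | succ n ih =>
    simp_rw [funext phi_succ]
    fun_prop

lemma prod_one_sub_sq_nonneg {n : ℕ} {x : EuclideanSpace ℝ (Fin n)} (hx : x ∈ cube n) :
    0 ≤ ∏ i, (1 - x i ^ 2) :=
  Finset.prod_nonneg fun i _ => sub_nonneg.2 ((sq_le_one_iff_abs_le_one _).2 (hx i))

lemma one_sub_norm_sq_phi {n : ℕ} {x : EuclideanSpace ℝ (Fin n)} (hx : x ∈ cube n) :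
    1 - ‖phi n x‖ ^ 2 = ∏ i, (1 - x i ^ 2) := by
  induction n with
  | zero => simp [phi, real_norm_sq_eq]
  | succ n ih =>
    have htail : 1 - ‖phi n (tail_s9 x)‖ ^ 2 = ∏ i : Fin n, (1 - x i.succ ^ 2) := ih (tail_mem_cube hx)
    have hnonneg : 0 ≤ 1 - ‖phi n (tail_s9 x)‖ ^ 2 := htail ▸ prod_one_sub_sq_nonneg (tail_mem_cube hx)
    rw [phi_succ, norm_sq_cons, mul_pow, Real.sq_sqrt hnonneg, Fin.prod_univ_succ, ← htail]
    ring

lemma norm_phi_le_one {n : ℕ} {x : EuclideanSpace ℝ (Fin n)} (hx : x ∈ cube n) :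
    ‖phi n x‖ ≤ 1 := by
  have := one_sub_norm_sq_phi hx ▸ prod_one_sub_sq_nonneg hx
  nlinarith [norm_nonneg (phi n x)]

lemma norm_phi_eq_one_iff {n : ℕ} {x : EuclideanSpace ℝ (Fin n)} (hx : x ∈ cube n) :
    ‖phi n x‖ = 1 ↔ ∃ i, |x i| = 1 := by
  have hsq {a : ℝ} (ha : 0 ≤ a) : a ^ 2 = 1 ↔ a = 1 := pow_eq_one_iff_of_nonneg ha two_ne_zero
  rw [← hsq (norm_nonneg _), ← sub_eq_zero, ← neg_eq_zero, neg_sub, one_sub_norm_sq_phi hx,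
    Finset.prod_eq_zero_iff]
  simp only [Finset.mem_univ, true_and, sub_eq_zero, eq_comm (a := (1 : ℝ)), ← sq_abs (x _),
    hsq (abs_nonneg _)]

lemma phi_mapsTo (n : ℕ) : Set.MapsTo (phi n) (cube n) (disk n) :=
  fun _ hx => norm_phi_le_one hx

lemma phi_surjOn (n : ℕ) : Set.SurjOn (phi n) (cube n) (disk n) := by
  induction n with
  | zero => intro u _; exact ⟨u, fun i => i.elim0, rfl⟩
  | succ n ih =>
    intro u (hu : ‖u‖ ≤ 1)
    have hsplit := norm_sq_eq_head_add_tail u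
    obtain ⟨y, hy, hyu⟩ := ih (show ‖tail_s9 u‖ ≤ 1 by nlinarith [norm_nonneg (tail_s9 u), norm_nonneg u])
    set s := √(1 - ‖tail_s9 u‖ ^ 2)
    have hu₀ : |u 0| ≤ s := Real.abs_le_sqrt (by nlinarith [norm_nonneg u])
    -- When `s = 0`, also `u 0 = 0`, and the junk value `u 0 / 0 = 0` is the right parameter.
    have hcancel : u 0 / s * s = u 0 := by
      rcases eq_or_ne s 0 with hs | hs
      · simp [hs, abs_nonpos_iff.1 (hs ▸ hu₀)]
      · exact div_mul_cancel₀ _ hs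
    refine ⟨cons (u 0 / s) y, cons_mem_cube ?_ hy, ?_⟩
    · rw [abs_div, abs_of_nonneg (Real.sqrt_nonneg _)]
      exact div_le_one_of_le₀ hu₀ (Real.sqrt_nonneg _)
    · rw [phi_succ, tail_cons, hyu, cons_zero, hcancel, cons_head_tail]

lemma phi_eq_phi_of_forall_le {n : ℕ} {x x' : EuclideanSpace ℝ (Fin n)} (hx : x ∈ cube n)
    {i : Fin n} (hi : |x i| = 1) (hagree : ∀ j, i ≤ j → x j = x' j) : phi n x = phi n x' := by
  induction n with
  | zero => exact i.elim0
  | succ n ih =>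
    cases i using Fin.cases with
    | zero => congr; ext j; exact hagree j (Fin.zero_le j)
    | succ i =>
      have htail : phi n (tail_s9 x) = phi n (tail_s9 x') :=
        ih (tail_mem_cube hx) hi fun j hj => hagree j.succ (Fin.succ_le_succ_iff.2 hj)
      have hnorm : ‖phi n (tail_s9 x)‖ = 1 := (norm_phi_eq_one_iff (tail_mem_cube hx)).2 ⟨i, hi⟩
      simp [phi_succ, ← htail, hnorm]

lemma eq_or_exists_of_phi_eq_phi {n : ℕ} {x x' : EuclideanSpace ℝ (Fin n)} (hx : x ∈ cube n)
    (hx' : x' ∈ cube n) (h : phi n x = phi n x') :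
    x = x' ∨ ∃ i : Fin n, 1 ≤ (i : ℕ) ∧ |x i| = 1 ∧ ∀ j, i ≤ j → x j = x' j := by
  induction n with
  | zero => left; ext j; exact j.elim0
  | succ n ih =>
    rw [phi_succ, phi_succ] at h
    have htail : phi n (tail_s9 x) = phi n (tail_s9 x') := congrArg tail_s9 h
    have hhead := congrArg (· 0) h
    simp only [cons_zero, ← htail] at hhead
    rcases ih (tail_mem_cube hx) (tail_mem_cube hx') htail with htail_eq | ⟨i, -, hi, hagree⟩
    · by_cases hnorm : ‖phi n (tail_s9 x)‖ = 1
      · obtain ⟨i, hi⟩ := (norm_phi_eq_one_iff (tail_mem_cube hx)).1 hnorm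
        refine Or.inr ⟨i.succ, by simp, hi, Fin.forall_fin_succ.2 ⟨by simp, fun j _ => ?_⟩⟩
        exact congrArg (· j) htail_eq
      · have hlt : ‖phi n (tail_s9 x)‖ < 1 := (norm_phi_le_one (tail_mem_cube hx)).lt_of_ne hnorm
        have hs : √(1 - ‖phi n (tail_s9 x)‖ ^ 2) ≠ 0 :=
          (Real.sqrt_pos.2 (by nlinarith [norm_nonneg (phi n (tail_s9 x))])).ne'
        left
        rw [← cons_head_tail x, ← cons_head_tail x', htail_eq, mul_right_cancel₀ hs hhead]
    · refine Or.inr ⟨i.succ, by simp, hi, Fin.forall_fin_succ.2 ⟨by simp, fun j hj => ?_⟩⟩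
      exact hagree j (Fin.succ_le_succ_iff.1 hj)

theorem IsCompact.exists_continuousOn_factorization {α β X : Type*} [TopologicalSpace α]
    [TopologicalSpace β] [T2Space β] [TopologicalSpace X] {s : Set α} {t : Set β} {f : α → β}
    {a : α → X} (hs : IsCompact s) (hne : s.Nonempty) (hf : ContinuousOn f s)
    (hmaps : Set.MapsTo f s t) (hsurj : Set.SurjOn f s t) (ha : ContinuousOn a s)
    (hfib : ∀ x ∈ s, ∀ x' ∈ s, f x = f x' → a x = a x') :
    ∃ g : β → X, ContinuousOn g t ∧ ∀ x ∈ s, a x = g (f x) := by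
  have : Nonempty α := hne.to_subtype.map Subtype.val
  have hfac (x) (hx : x ∈ s) : a x = a (Function.invFunOn f s (f x)) :=
    hfib x hx _ (Function.invFunOn_mem ⟨x, hx, rfl⟩) (Function.invFunOn_eq ⟨x, hx, rfl⟩).symm
  refine ⟨fun y => a (Function.invFunOn f s y), ?_, hfac⟩
  have : CompactSpace s := isCompact_iff_compactSpace.1 hs
  have hF := hf.mapsToRestrict hmaps
  have hquot : Topology.IsQuotientMap (hmaps.restrict f s t) :=
    hF.isClosedMap.isQuotientMap hF (hmaps.restrict_surjective_iff.2 hsurj)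
  rw [continuousOn_iff_continuous_domRestrict, hquot.continuous_iff]
  convert continuousOn_iff_continuous_domRestrict.1 ha using 1
  funext x
  exact (hfac x x.2).symm

theorem factors_through_globe_iff_globular_general {X : Type*} [TopologicalSpace X]
    (n : ℕ)
    (a : EuclideanSpace ℝ (Fin n) → X) (ha : ContinuousOn a (cube n)) :
    (∃ g : EuclideanSpace ℝ (Fin n) → X, ContinuousOn g (disk n) ∧
        ∀ x ∈ cube n, a x = g (phi n x)) ↔
      ∀ i : Fin n, 1 ≤ (i : ℕ) →
        ∀ x ∈ cube n, ∀ x' ∈ cube n,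
          x i = x' i → (x i = 1 ∨ x i = -1) →
          (∀ j : Fin n, i < j → x j = x' j) →
          a x = a x' := by
  constructor
  · rintro ⟨g, -, hfac⟩ i - x hx x' hx' hxi hpm hagree
    have hagree_from_i : ∀ j, i ≤ j → x j = x' j := fun j hj => by
      rcases hj.eq_or_lt with rfl | hlt
      exacts [hxi, hagree j hlt]
    rw [hfac x hx, hfac x' hx',
      phi_eq_phi_of_forall_le hx ((abs_eq zero_le_one).2 hpm) hagree_from_i]
  · intro H
    refine (isCompact_cube n).exists_continuousOn_factorization ⟨0, by simp [cube]⟩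
      (continuous_phi n).continuousOn (phi_mapsTo n) (phi_surjOn n) ha ?_
    intro x hx x' hx' h
    obtain rfl | ⟨i, hi, hxi, hagree⟩ := eq_or_exists_of_phi_eq_phi hx hx' h
    · rfl
    · exact H i hi x hx x' hx' (hagree i le_rfl) ((abs_eq zero_le_one).1 hxi)
        fun j hj => hagree j hj.le

/-- a singular cube factors through the globe exactly when it is globular.
For a continuous `a : Iⁿ → X` (`n ≥ 1`), there is a continuous `g : Dⁿ → X` with
`a = g ∘ φₙ` iff, for every 0-based index `i ≥ 1` (`2 ≤ i ≤ n` 1-based), `a` takes equal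
values at points of `Iⁿ` that agree in the `i`-th coordinate, which is `±1`, and agree
in all later coordinates. -/
theorem factors_through_globe_iff_globular {X : Type*} [TopologicalSpace X]
    (n : ℕ) (hn : 1 ≤ n)
    (a : EuclideanSpace ℝ (Fin n) → X) (ha : ContinuousOn a (cube n)) :
    (∃ g : EuclideanSpace ℝ (Fin n) → X, ContinuousOn g (disk n) ∧
        ∀ x ∈ cube n, a x = g (phi n x)) ↔
      ∀ i : Fin n, 1 ≤ (i : ℕ) →
        ∀ x ∈ cube n, ∀ x' ∈ cube n,
          x i = x' i → (x i = 1 ∨ x i = -1) →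
          (∀ j : Fin n, i < j → x j = x' j) →
          a x = a x' :=
  factors_through_globe_iff_globular_general n a ha
end
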